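/- Under the IV assumptions, for each z ∈ {+1,-1}: 2E[Y | Z=z, X] = E_U(E[Y(1)+Y(-1) | X, U]) + E_U(E[Y(1)-Y(-1) | X, U] · E[A | Z=z, X, U]); consequently 2(E[Y|Z=1,X] - E[Y|Z=-1,X]) = E_U[ E[Y(1)-Y(-1)|X,U]·(E[A|Z=1,X,U] - E[A|Z=-1,X,U]) ]. -/

import Mathlib

open MeasureTheory ProbabilityTheory

open Set

lemma integrable_mul_indicator_one {Ω : Type*} [mΩ : MeasurableSpace Ω] {μ : Measure Ω}
    {h : Ω → ℝ} (hint : Integrable h μ) {E : Set Ω} (hE : MeasurableSet E) :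
    Integrable (fun ω => h ω * E.indicator (fun _ => (1:ℝ)) ω) μ := by
  have : (fun ω => h ω * E.indicator (fun _ => (1:ℝ)) ω) = E.indicator h := by
    funext ω; by_cases hω : ω ∈ E <;> simp [Set.indicator_apply, hω]
  rw [this]; exact hint.indicator hE

lemma lemA {Ω β : Type*} [mΩ : MeasurableSpace Ω] [StandardBorelSpace Ω] [Nonempty Ω]
    [mβ : MeasurableSpace β] {δ : Type*} [mδ : MeasurableSpace δ] (W : Ω → δ)
    (hm' : MeasurableSpace.comap W inferInstance ≤ mΩ)
    (μ : Measure Ω) [IsFiniteMeasure μ]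
    {f : Ω → ℝ} {g : Ω → β}
    (hf : Measurable f) (hfi : Integrable f μ) (hg : Measurable g)
    {t : Set β} (ht : MeasurableSet t)
    (hCI : CondIndepFun (MeasurableSpace.comap W inferInstance) hm' f g μ) :
    μ[fun ω => f ω * (g ⁻¹' t).indicator (fun _ => (1:ℝ)) ω | MeasurableSpace.comap W inferInstance] =ᵐ[μ]
      fun ω => (μ[f|MeasurableSpace.comap W inferInstance]) ω * (μ⟦g ⁻¹' t | MeasurableSpace.comap W inferInstance⟧) ω := by
  have hGm : MeasurableSet (g ⁻¹' t) := hg ht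
  have hq : ∀ q : ℚ, ∀ᵐ ω ∂μ,
      condExpKernel μ (MeasurableSpace.comap W inferInstance) ω (f ⁻¹' Set.Iic (q:ℝ) ∩ g ⁻¹' t)
        = condExpKernel μ (MeasurableSpace.comap W inferInstance) ω (f ⁻¹' Set.Iic (q:ℝ)) * condExpKernel μ (MeasurableSpace.comap W inferInstance) ω (g ⁻¹' t) := by
    intro q
    have h := (Kernel.indepFun_iff_measure_inter_preimage_eq_mul.1 hCI)
      (Set.Iic (q:ℝ)) t measurableSet_Iic ht
    exact ae_eq_of_ae_eq_trim h
  have hmeas_eq : ∀ᵐ ω ∂μ,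
      ((condExpKernel μ (MeasurableSpace.comap W inferInstance) ω).restrict (g ⁻¹' t)).map f
        = (condExpKernel μ (MeasurableSpace.comap W inferInstance) ω (g ⁻¹' t)) • ((condExpKernel μ (MeasurableSpace.comap W inferInstance) ω).map f) := by
    filter_upwards [ae_all_iff.2 hq] with ω hω
    set κ := condExpKernel μ (MeasurableSpace.comap W inferInstance) ω with hκ
    haveI : IsFiniteMeasure ((κ.restrict (g ⁻¹' t)).map f) := by
      constructor
      rw [Measure.map_apply hf MeasurableSet.univ]
      exact (measure_lt_top _ _)
    refine ext_of_generate_finite _ (BorelSpace.measurable_eq.trans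
      Real.borel_eq_generateFrom_Iic_rat) Real.isPiSystem_Iic_rat (fun s hs => ?_) ?_
    · simp only [Set.mem_iUnion, Set.mem_singleton_iff] at hs
      obtain ⟨q, rfl⟩ := hs
      rw [Measure.map_apply hf measurableSet_Iic,
        Measure.restrict_apply (hf measurableSet_Iic), Measure.smul_apply,
        Measure.map_apply hf measurableSet_Iic, hω q, smul_eq_mul, mul_comm]
    · rw [Measure.map_apply hf MeasurableSet.univ, Set.preimage_univ,
        Measure.restrict_apply_univ, Measure.smul_apply,
        Measure.map_apply hf MeasurableSet.univ, Set.preimage_univ,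
        measure_univ, smul_eq_mul, mul_one]
  have hfi' : Integrable (fun ω => f ω * (g ⁻¹' t).indicator (fun _ => (1:ℝ)) ω) μ := by
    have : (fun ω => f ω * (g ⁻¹' t).indicator (fun _ => (1:ℝ)) ω)
        = (g ⁻¹' t).indicator f := by
      funext ω; by_cases h : ω ∈ g ⁻¹' t <;> simp [Set.indicator_apply, h]
    rw [this]; exact hfi.indicator hGm
  have h1 := condExp_ae_eq_integral_condExpKernel hm' hfi'
  have h2 := condExp_ae_eq_integral_condExpKernel hm' hfi
  have h3 := condExpKernel_ae_eq_condExp (μ := μ) hm' hGm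
  filter_upwards [h1, h2, h3, hmeas_eq] with ω e1 e2 e3 emeas
  rw [e1, e2, ← e3]
  set κ := condExpKernel μ (MeasurableSpace.comap W inferInstance) ω with hκ
  have hind : (fun y => f y * (g ⁻¹' t).indicator (fun _ => (1:ℝ)) y)
      = (g ⁻¹' t).indicator f := by
    funext y; by_cases h : y ∈ g ⁻¹' t <;> simp [Set.indicator_apply, h]
  rw [hind, integral_indicator hGm]
  have e4 : ∫ x, x ∂((κ.restrict (g ⁻¹' t)).map f) = ∫ y in g ⁻¹' t, f y ∂κ :=
    integral_map hf.aemeasurable aestronglyMeasurable_id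
  have e5 : ∫ x, x ∂(κ.map f) = ∫ y, f y ∂κ :=
    integral_map hf.aemeasurable aestronglyMeasurable_id
  rw [← e4, emeas, integral_smul_measure, e5, smul_eq_mul, mul_comm, measureReal_def]

lemma lemB {Ω 𝒳 𝒰 : Type*} [mΩ : MeasurableSpace Ω] [StandardBorelSpace Ω] [Nonempty Ω]
    [m𝒳 : MeasurableSpace 𝒳] [m𝒰 : MeasurableSpace 𝒰]
    (μ : Measure Ω) [IsProbabilityMeasure μ]
    {Z : Ω → ℝ} {X : Ω → 𝒳} {U : Ω → 𝒰}
    (hZm : Measurable Z) (hX : Measurable X) (hU : Measurable U)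
    (hmX : MeasurableSpace.comap X inferInstance ≤ mΩ)
    (hmXU : MeasurableSpace.comap (fun ω => (X ω, U ω)) inferInstance ≤ mΩ)
    (hCIZU : CondIndepFun (MeasurableSpace.comap X inferInstance) hmX Z U μ)
    {s : Set ℝ} (hs : MeasurableSet s) :
    μ[(Z ⁻¹' s).indicator (fun _ => (1:ℝ)) |
        MeasurableSpace.comap (fun ω => (X ω, U ω)) inferInstance]
      =ᵐ[μ] μ[(Z ⁻¹' s).indicator (fun _ => (1:ℝ)) | MeasurableSpace.comap X inferInstance] := by
  have hpair : Measurable (fun ω => (X ω, U ω)) := hX.prodMk hU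
  set iZ : Ω → ℝ := (Z ⁻¹' s).indicator (fun _ => (1:ℝ)) with hiZ
  have hiZm : Measurable iZ := (measurable_const.indicator (hZm hs))
  have hiZint : Integrable iZ μ := (integrable_const (1:ℝ)).indicator (hZm hs)
  set g0 : Ω → ℝ := μ[iZ | MeasurableSpace.comap X inferInstance] with hg0
  have hg0int : Integrable g0 μ := integrable_condExp
  have hkey : ∀ B : Set (𝒳 × 𝒰), MeasurableSet B →
      ∫ ω in (fun ω => (X ω, U ω)) ⁻¹' B, g0 ω ∂μ
        = ∫ ω in (fun ω => (X ω, U ω)) ⁻¹' B, iZ ω ∂μ := by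
    have htot : ∫ ω, g0 ω ∂μ = ∫ ω, iZ ω ∂μ := integral_condExp (μ := μ) (f := iZ) hmX
    have main := MeasurableSpace.induction_on_inter
      (C := fun B _ => ∫ ω in (fun ω => (X ω, U ω)) ⁻¹' B, g0 ω ∂μ
        = ∫ ω in (fun ω => (X ω, U ω)) ⁻¹' B, iZ ω ∂μ)
      generateFrom_prod.symm isPiSystem_prod ?_ ?_ ?_ ?_
    · exact fun B hB => main B hB
    · simp
    · intro B hB
      obtain ⟨B1, hB1, B2, hB2, rfl⟩ := hB
      simp only [Set.mem_setOf_eq] at hB1 hB2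
      have hpre : (fun ω => (X ω, U ω)) ⁻¹' (B1 ×ˢ B2) = X ⁻¹' B1 ∩ U ⁻¹' B2 := by
        ext ω; simp [Set.mem_prod]
      set iU : Ω → ℝ := (U ⁻¹' B2).indicator (fun _ => (1:ℝ)) with hiU
      have hiUint : Integrable iU μ := (integrable_const (1:ℝ)).indicator (hU hB2)
      have hindic : ∀ h : Ω → ℝ, (U ⁻¹' B2).indicator h = fun ω => h ω * iU ω := by
        intro h; funext ω; by_cases hω : ω ∈ U ⁻¹' B2 <;> simp [Set.indicator_apply, hω, hiU]
      have hXB1 : MeasurableSet[MeasurableSpace.comap X inferInstance] (X ⁻¹' B1) :=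
        ⟨B1, hB1, rfl⟩
      have hsplit : ∀ h : Ω → ℝ,
          ∫ ω in (fun ω => (X ω, U ω)) ⁻¹' (B1 ×ˢ B2), h ω ∂μ
            = ∫ ω in X ⁻¹' B1, h ω * iU ω ∂μ := by
        intro h
        rw [hpre, ← setIntegral_indicator (hU hB2), hindic h]
      rw [hsplit, hsplit]
      have hiZiU_int : Integrable (fun ω => iZ ω * iU ω) μ :=
        integrable_mul_indicator_one hiZint (hU hB2)
      have hg0iU_int : Integrable (fun ω => g0 ω * iU ω) μ :=
        integrable_mul_indicator_one hg0int (hU hB2)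
      rw [← setIntegral_condExp hmX hiZiU_int hXB1, ← setIntegral_condExp hmX hg0iU_int hXB1]
      refine setIntegral_congr_ae (hmX _ hXB1) ?_
      have h1 : μ[(fun ω => g0 ω * iU ω) | MeasurableSpace.comap X inferInstance]
          =ᵐ[μ] fun ω => g0 ω * (μ[iU | MeasurableSpace.comap X inferInstance]) ω :=
        condExp_mul_of_stronglyMeasurable_left stronglyMeasurable_condExp hg0iU_int hiUint
      have h2 : (fun ω => iZ ω * iU ω) = (Z ⁻¹' s ∩ U ⁻¹' B2).indicator (fun _ => (1:ℝ)) := by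
        funext ω
        by_cases h1 : ω ∈ Z ⁻¹' s <;> by_cases h2 : ω ∈ U ⁻¹' B2 <;>
          simp [Set.indicator_apply, h1, h2, hiZ, hiU]
      have h3 := (condIndepFun_iff_condExp_inter_preimage_eq_mul
        (m' := MeasurableSpace.comap X inferInstance) (hm' := hmX) hZm hU).1 hCIZU s B2 hs hB2
      rw [h2]
      filter_upwards [h1, h3] with ω e1 e3
      intro _
      rw [e1, e3]
    · intro B hBm hB
      have hcm : MeasurableSet ((fun ω => (X ω, U ω)) ⁻¹' B) := hpair hBm
      have e1 := integral_add_compl hcm hg0int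
      have e2 := integral_add_compl hcm hiZint
      rw [Set.preimage_compl]
      linarith
    · intro f hdisj hfm hf
      rw [Set.preimage_iUnion, integral_iUnion (fun i => hpair (hfm i))
          (fun i j hij => (hdisj hij).preimage _) hg0int.integrableOn,
        integral_iUnion (fun i => hpair (hfm i))
          (fun i j hij => (hdisj hij).preimage _) hiZint.integrableOn]
      exact tsum_congr hf
  have hle : MeasurableSpace.comap X inferInstance
      ≤ MeasurableSpace.comap (fun ω => (X ω, U ω)) inferInstance := by
    rintro t ⟨B, hB, rfl⟩
    exact ⟨B ×ˢ Set.univ, hB.prod MeasurableSet.univ, by ext ω; simp⟩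
  refine (ae_eq_condExp_of_forall_setIntegral_eq hmXU hiZint
    (fun t _ _ => hg0int.integrableOn) ?_ ?_).symm
  · rintro t ⟨B, hB, rfl⟩ _
    exact hkey B hB
  · exact StronglyMeasurable.aestronglyMeasurable (stronglyMeasurable_condExp.mono hle)

/-- under the IV assumptions, for each `z ∈ {+1,-1}`,
`2E[Y|Z=z,X] = E_U(E[Y(1)+Y(-1)|X,U]) + E_U(E[Y(1)-Y(-1)|X,U]·E[A|Z=z,X,U])`,
and consequently
`2(E[Y|Z=1,X] - E[Y|Z=-1,X]) = E_U[E[Y(1)-Y(-1)|X,U]·(E[A|Z=1,X,U]-E[A|Z=-1,X,U])]`. -/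
theorem stmt12 {Ω 𝒳 𝒰 : Type*} [MeasurableSpace Ω] [StandardBorelSpace Ω] [Nonempty Ω]
    [MeasurableSpace 𝒳] [MeasurableSpace 𝒰]
    (μ : Measure Ω) [IsProbabilityMeasure μ]
    (Y Y1 Ym1 A Z : Ω → ℝ) (X : Ω → 𝒳) (U : Ω → 𝒰)
    (hY1 : Measurable Y1) (hYm1 : Measurable Ym1) (hA : Measurable A)
    (hZm : Measurable Z) (hX : Measurable X) (hU : Measurable U)
    (hY1int : Integrable Y1 μ) (hYm1int : Integrable Ym1 μ)
    (hAbin : ∀ ω, A ω = 1 ∨ A ω = -1)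
    (hZbin : ∀ ω, Z ω = 1 ∨ Z ω = -1)
    -- consistency: 2Y = Y(1)(1+A) + Y(-1)(1-A)
    (hcons : ∀ ω, 2 * Y ω = Y1 ω * (1 + A ω) + Ym1 ω * (1 - A ω))
    (hmX : MeasurableSpace.comap X inferInstance ≤ ‹MeasurableSpace Ω›)
    (hmXU : MeasurableSpace.comap (fun ω => (X ω, U ω)) inferInstance
      ≤ ‹MeasurableSpace Ω›)
    -- Y(a) ⫫ (Z,A) | (X,U)
    (hCI1 : CondIndepFun (MeasurableSpace.comap (fun ω => (X ω, U ω)) inferInstance) hmXU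
      Y1 (fun ω => (Z ω, A ω)) μ)
    (hCIm1 : CondIndepFun (MeasurableSpace.comap (fun ω => (X ω, U ω)) inferInstance) hmXU
      Ym1 (fun ω => (Z ω, A ω)) μ)
    -- Z ⫫ U | X
    (hCIZU : CondIndepFun (MeasurableSpace.comap X inferInstance) hmX Z U μ)
    (πZ : ℝ → 𝒳 → ℝ)
    (hπcond : ∀ z, (z = 1 ∨ z = -1) →
      μ[(fun ω => if Z ω = z then (1:ℝ) else 0) |
        MeasurableSpace.comap X inferInstance] =ᵐ[μ] fun ω => πZ z (X ω))
    (hπpos : ∀ᵐ ω ∂μ, 0 < πZ 1 (X ω) ∧ πZ 1 (X ω) < 1)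
    (hπsum : ∀ x, πZ (-1) x = 1 - πZ 1 x)
    -- μ_z^Y(x) = E[Y|Z=z,X=x]
    (μY : ℝ → 𝒳 → ℝ)
    (hμY : ∀ z, (z = 1 ∨ z = -1) →
      μ[(fun ω => Y ω * (if Z ω = z then (1:ℝ) else 0)) |
        MeasurableSpace.comap X inferInstance] =ᵐ[μ] fun ω => μY z (X ω) * πZ z (X ω))
    -- S(x,u) = E[Y(1)+Y(-1)|X=x,U=u] and Γ(x,u) = E[Y(1)-Y(-1)|X=x,U=u]
    (S Γ : 𝒳 × 𝒰 → ℝ)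
    (hS : μ[(fun ω => Y1 ω + Ym1 ω) |
        MeasurableSpace.comap (fun ω => (X ω, U ω)) inferInstance]
      =ᵐ[μ] fun ω => S (X ω, U ω))
    (hΓ : μ[(fun ω => Y1 ω - Ym1 ω) |
        MeasurableSpace.comap (fun ω => (X ω, U ω)) inferInstance]
      =ᵐ[μ] fun ω => Γ (X ω, U ω))
    -- conditional probability of Z given (X,U) and α_z(x,u) = E[A|Z=z,X=x,U=u]
    (πZU : ℝ → 𝒳 × 𝒰 → ℝ)
    (hπZU : ∀ z, (z = 1 ∨ z = -1) →
      μ[(fun ω => if Z ω = z then (1:ℝ) else 0) |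
          MeasurableSpace.comap (fun ω => (X ω, U ω)) inferInstance]
        =ᵐ[μ] fun ω => πZU z (X ω, U ω))
    (α : ℝ → 𝒳 × 𝒰 → ℝ)
    (hα : ∀ z, (z = 1 ∨ z = -1) →
      μ[(fun ω => A ω * (if Z ω = z then (1:ℝ) else 0)) |
          MeasurableSpace.comap (fun ω => (X ω, U ω)) inferInstance]
        =ᵐ[μ] fun ω => α z (X ω, U ω) * πZU z (X ω, U ω)) :
    (∀ z, (z = 1 ∨ z = -1) →
      (fun ω => 2 * μY z (X ω)) =ᵐ[μ]
        μ[(fun ω => S (X ω, U ω) + Γ (X ω, U ω) * α z (X ω, U ω)) |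
          MeasurableSpace.comap X inferInstance]) ∧
    ((fun ω => 2 * (μY 1 (X ω) - μY (-1) (X ω))) =ᵐ[μ]
      μ[(fun ω => Γ (X ω, U ω) * (α 1 (X ω, U ω) - α (-1) (X ω, U ω))) |
        MeasurableSpace.comap X inferInstance]) := by
  classical
  have hg : Measurable (fun ω => (Z ω, A ω)) := hZm.prodMk hA
  have hle : MeasurableSpace.comap X inferInstance
      ≤ MeasurableSpace.comap (fun ω => (X ω, U ω)) inferInstance := by
    rintro t ⟨B, hB, rfl⟩
    exact ⟨B ×ˢ Set.univ, hB.prod MeasurableSet.univ, by ext ω; simp⟩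
  have hAint : Integrable A μ := by
    refine (integrable_const (1:ℝ)).mono' hA.aestronglyMeasurable (ae_of_all _ fun ω => ?_)
    rcases hAbin ω with h | h <;> simp [h]
  have hSint : Integrable (fun ω => S (X ω, U ω)) μ := integrable_condExp.congr hS
  have hΓint : Integrable (fun ω => Γ (X ω, U ω)) μ := integrable_condExp.congr hΓ
  have key : ∀ z : ℝ, (z = 1 ∨ z = -1) →
      ((fun ω => 2 * μY z (X ω)) =ᵐ[μ]
        μ[(fun ω => S (X ω, U ω) + Γ (X ω, U ω) * α z (X ω, U ω)) |
          MeasurableSpace.comap X inferInstance]) ∧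
      Integrable (fun ω => Γ (X ω, U ω) * α z (X ω, U ω)) μ := by
    intro z hz
    set iz : Ω → ℝ := (Z ⁻¹' {z}).indicator (fun _ => (1:ℝ)) with hiz
    have hizp : ∀ ω, (if Z ω = z then (1:ℝ) else 0) = iz ω := by
      intro ω; simp [hiz, Set.indicator_apply]
    set i1 : Ω → ℝ := ((fun ω => (Z ω, A ω)) ⁻¹' ({z} ×ˢ ({1} : Set ℝ))).indicator
      (fun _ => (1:ℝ)) with hi1
    set i2 : Ω → ℝ := ((fun ω => (Z ω, A ω)) ⁻¹' ({z} ×ˢ ({-1} : Set ℝ))).indicator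
      (fun _ => (1:ℝ)) with hi2
    have hizm : MeasurableSet (Z ⁻¹' {z}) := hZm (measurableSet_singleton z)
    have hizint : Integrable iz μ := (integrable_const (1:ℝ)).indicator hizm
    have ht1 : MeasurableSet ({z} ×ˢ ({1} : Set ℝ)) :=
      (measurableSet_singleton z).prod (measurableSet_singleton 1)
    have ht2 : MeasurableSet ({z} ×ˢ ({-1} : Set ℝ)) :=
      (measurableSet_singleton z).prod (measurableSet_singleton (-1))
    have ht0 : MeasurableSet ({z} ×ˢ (Set.univ : Set ℝ)) :=
      (measurableSet_singleton z).prod MeasurableSet.univ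
    have hset0 : (fun ω => (Z ω, A ω)) ⁻¹' ({z} ×ˢ (Set.univ : Set ℝ)) = Z ⁻¹' {z} := by
      ext ω; simp [eq_comm]
    have hi1int : Integrable i1 μ := (integrable_const (1:ℝ)).indicator (hg ht1)
    have hi2int : Integrable i2 μ := (integrable_const (1:ℝ)).indicator (hg ht2)
    -- pointwise identity A * iz = i1 - i2
    have hAiz : ∀ ω, A ω * iz ω = i1 ω - i2 ω := by
      intro ω
      by_cases hZω : Z ω = z
      · rcases hAbin ω with h | h <;>
          · simp only [hiz, hi1, hi2, Set.indicator_apply, Set.mem_preimage, Set.mem_prod,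
              Set.mem_singleton_iff, hZω, h, Prod.mk.injEq, true_and, if_true]
            norm_num
      · simp [hiz, hi1, hi2, Set.indicator_apply, Set.mem_prod, hZω]
    -- integrability of products
    have hY1iz : Integrable (fun ω => Y1 ω * iz ω) μ :=
      integrable_mul_indicator_one hY1int hizm
    have hYm1iz : Integrable (fun ω => Ym1 ω * iz ω) μ :=
      integrable_mul_indicator_one hYm1int hizm
    have hY1i1 : Integrable (fun ω => Y1 ω * i1 ω) μ :=
      integrable_mul_indicator_one hY1int (hg ht1)
    have hY1i2 : Integrable (fun ω => Y1 ω * i2 ω) μ :=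
      integrable_mul_indicator_one hY1int (hg ht2)
    have hYm1i1 : Integrable (fun ω => Ym1 ω * i1 ω) μ :=
      integrable_mul_indicator_one hYm1int (hg ht1)
    have hYm1i2 : Integrable (fun ω => Ym1 ω * i2 ω) μ :=
      integrable_mul_indicator_one hYm1int (hg ht2)
    have hAizint : Integrable (fun ω => A ω * iz ω) μ :=
      integrable_mul_indicator_one hAint hizm
    -- names for conditional expectations w.r.t. σ(X,U)
    set E1 : Ω → ℝ := μ[Y1 | MeasurableSpace.comap (fun ω => (X ω, U ω)) inferInstance] with hE1
    set Em : Ω → ℝ := μ[Ym1 | MeasurableSpace.comap (fun ω => (X ω, U ω)) inferInstance] with hEm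
    set P : Ω → ℝ := μ[iz | MeasurableSpace.comap (fun ω => (X ω, U ω)) inferInstance] with hP
    set Q1 : Ω → ℝ := μ[i1 | MeasurableSpace.comap (fun ω => (X ω, U ω)) inferInstance] with hQ1
    set Q2 : Ω → ℝ := μ[i2 | MeasurableSpace.comap (fun ω => (X ω, U ω)) inferInstance] with hQ2
    set aα : Ω → ℝ := μ[(fun ω => A ω * iz ω) |
      MeasurableSpace.comap (fun ω => (X ω, U ω)) inferInstance] with haαdef
    set p0 : Ω → ℝ := μ[iz | MeasurableSpace.comap X inferInstance] with hp0
    -- lemA applications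
    have hL0a : μ[(fun ω => Y1 ω * iz ω) |
        MeasurableSpace.comap (fun ω => (X ω, U ω)) inferInstance]
          =ᵐ[μ] fun ω => E1 ω * P ω := by
      have h := lemA (fun ω => (X ω, U ω)) hmXU μ hY1 hY1int hg ht0 hCI1
      rw [hset0] at h
      exact h
    have hL0b : μ[(fun ω => Ym1 ω * iz ω) |
        MeasurableSpace.comap (fun ω => (X ω, U ω)) inferInstance]
          =ᵐ[μ] fun ω => Em ω * P ω := by
      have h := lemA (fun ω => (X ω, U ω)) hmXU μ hYm1 hYm1int hg ht0 hCIm1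
      rw [hset0] at h
      exact h
    have hL1a : μ[(fun ω => Y1 ω * i1 ω) |
        MeasurableSpace.comap (fun ω => (X ω, U ω)) inferInstance]
          =ᵐ[μ] fun ω => E1 ω * Q1 ω :=
      lemA (fun ω => (X ω, U ω)) hmXU μ hY1 hY1int hg ht1 hCI1
    have hL1b : μ[(fun ω => Y1 ω * i2 ω) |
        MeasurableSpace.comap (fun ω => (X ω, U ω)) inferInstance]
          =ᵐ[μ] fun ω => E1 ω * Q2 ω :=
      lemA (fun ω => (X ω, U ω)) hmXU μ hY1 hY1int hg ht2 hCI1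
    have hL2a : μ[(fun ω => Ym1 ω * i1 ω) |
        MeasurableSpace.comap (fun ω => (X ω, U ω)) inferInstance]
          =ᵐ[μ] fun ω => Em ω * Q1 ω :=
      lemA (fun ω => (X ω, U ω)) hmXU μ hYm1 hYm1int hg ht1 hCIm1
    have hL2b : μ[(fun ω => Ym1 ω * i2 ω) |
        MeasurableSpace.comap (fun ω => (X ω, U ω)) inferInstance]
          =ᵐ[μ] fun ω => Em ω * Q2 ω :=
      lemA (fun ω => (X ω, U ω)) hmXU μ hYm1 hYm1int hg ht2 hCIm1
    -- decomposition of 2·Y·iz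
    have hdecomp : (fun ω => 2 * (Y ω * iz ω)) =
        ((fun ω => Y1 ω * iz ω) + fun ω => Ym1 ω * iz ω) +
          (((fun ω => Y1 ω * i1 ω) - fun ω => Y1 ω * i2 ω) -
            ((fun ω => Ym1 ω * i1 ω) - fun ω => Ym1 ω * i2 ω)) := by
      funext ω
      simp only [Pi.add_apply, Pi.sub_apply]
      have h2 := hcons ω
      have hAi := hAiz ω
      linear_combination iz ω * h2 + (Y1 ω - Ym1 ω) * hAi
    have hJ : μ[(fun ω => 2 * (Y ω * iz ω)) |
        MeasurableSpace.comap (fun ω => (X ω, U ω)) inferInstance] =ᵐ[μ]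
          fun ω => (E1 ω * P ω + Em ω * P ω) +
            ((E1 ω * Q1 ω - E1 ω * Q2 ω) - (Em ω * Q1 ω - Em ω * Q2 ω)) := by
      have a1 := (condExp_add (μ := μ)
        (m := MeasurableSpace.comap (fun ω => (X ω, U ω)) inferInstance)
        hY1iz hYm1iz).trans (hL0a.add hL0b)
      have a2 := (condExp_sub (μ := μ)
        (m := MeasurableSpace.comap (fun ω => (X ω, U ω)) inferInstance)
        hY1i1 hY1i2).trans (hL1a.sub hL1b)
      have a3 := (condExp_sub (μ := μ)
        (m := MeasurableSpace.comap (fun ω => (X ω, U ω)) inferInstance)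
        hYm1i1 hYm1i2).trans (hL2a.sub hL2b)
      have a4 := (condExp_sub (μ := μ)
        (m := MeasurableSpace.comap (fun ω => (X ω, U ω)) inferInstance)
        (hY1i1.sub hY1i2) (hYm1i1.sub hYm1i2)).trans (a2.sub a3)
      have a5 := (condExp_add (μ := μ)
        (m := MeasurableSpace.comap (fun ω => (X ω, U ω)) inferInstance)
        (hY1iz.add hYm1iz) ((hY1i1.sub hY1i2).sub (hYm1i1.sub hYm1i2))).trans (a1.add a4)
      rw [hdecomp]
      exact a5
    -- relations between P, p0, πZ, πZU
    have hPp0 : P =ᵐ[μ] p0 :=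
      lemB μ hZm hX hU hmX hmXU hCIZU (measurableSet_singleton z)
    have hp0π : p0 =ᵐ[μ] fun ω => πZ z (X ω) := by
      have h := hπcond z hz
      simp only [hizp] at h
      exact h
    have hπ01 : ∀ᵐ ω ∂μ, 0 < πZ z (X ω) ∧ πZ z (X ω) < 1 := by
      rcases hz with rfl | rfl
      · exact hπpos
      · filter_upwards [hπpos] with ω h
        rw [hπsum]
        constructor <;> linarith [h.1, h.2]
    have hQπZU : (fun ω => πZU z (X ω, U ω)) =ᵐ[μ] P := by
      have h := hπZU z hz
      simp only [hizp] at h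
      exact h.symm
    have haα : aα =ᵐ[μ] fun ω => α z (X ω, U ω) * πZU z (X ω, U ω) := by
      have h := hα z hz
      simp only [hizp] at h
      exact h
    have hQ12 : aα =ᵐ[μ] fun ω => Q1 ω - Q2 ω := by
      have heq : (fun ω => A ω * iz ω) = fun ω => i1 ω - i2 ω := funext hAiz
      rw [haαdef, heq]
      exact condExp_sub hi1int hi2int _
    -- |aα| ≤ P a.e.
    have hbound : ∀ᵐ ω ∂μ, |aα ω| ≤ P ω := by
      have hizpos : ∀ ω, 0 ≤ iz ω := fun ω => Set.indicator_nonneg (fun _ _ => zero_le_one) ω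
      have hle1 : (fun ω => A ω * iz ω) ≤ᵐ[μ] iz := ae_of_all _ fun ω => by
        show A ω * iz ω ≤ iz ω
        rcases hAbin ω with h | h
        · rw [h, one_mul]
        · rw [h]; have := hizpos ω; linarith
      have hle2 : (fun ω => -(A ω * iz ω)) ≤ᵐ[μ] iz := ae_of_all _ fun ω => by
        show -(A ω * iz ω) ≤ iz ω
        rcases hAbin ω with h | h
        · rw [h, one_mul]; have := hizpos ω; linarith
        · rw [h]; have := hizpos ω; linarith
      have c1 := condExp_mono (μ := μ)
        (m := MeasurableSpace.comap (fun ω => (X ω, U ω)) inferInstance) hAizint hizint hle1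
      have c2 := condExp_mono (μ := μ)
        (m := MeasurableSpace.comap (fun ω => (X ω, U ω)) inferInstance) hAizint.neg hizint hle2
      have c3 := condExp_neg (μ := μ)
        (m := MeasurableSpace.comap (fun ω => (X ω, U ω)) inferInstance) (fun ω => A ω * iz ω)
      filter_upwards [c1, c2, c3] with ω e1 e2 e3
      have e2' : -(aα ω) ≤ P ω := by
        have : (μ[-(fun ω => A ω * iz ω) |
          MeasurableSpace.comap (fun ω => (X ω, U ω)) inferInstance]) ω = -(aα ω) := by
          rw [e3]; rfl
        rw [← this]
        exact e2
      exact abs_le.2 ⟨by linarith, e1⟩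
    -- a.e. representation of α
    have hαrep : ∀ᵐ ω ∂μ, α z (X ω, U ω) = aα ω / P ω ∧ |α z (X ω, U ω)| ≤ 1 := by
      filter_upwards [haα, hQπZU, hbound, hPp0, hp0π, hπ01] with ω h1 h2 h3 h4 h5 h6
      have hPω : P ω = πZ z (X ω) := by rw [h4, h5]
      have hPpos : 0 < P ω := by rw [hPω]; exact h6.1
      have hprod : aα ω = α z (X ω, U ω) * P ω := by rw [h1, h2]
      constructor
      · rw [hprod]; field_simp
      · rw [hprod, abs_mul, abs_of_pos hPpos] at h3
        have h1P : |α z (X ω, U ω)| * P ω ≤ 1 * P ω := by rw [one_mul]; exact h3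
        exact le_of_mul_le_mul_right h1P hPpos
    -- integrability of Γ·α
    have hΓα_int : Integrable (fun ω => Γ (X ω, U ω) * α z (X ω, U ω)) μ := by
      have haesm : AEStronglyMeasurable (fun ω => Γ (X ω, U ω) * α z (X ω, U ω)) μ := by
        refine AEStronglyMeasurable.congr (f := fun ω =>
          (μ[(fun ω => Y1 ω - Ym1 ω) |
            MeasurableSpace.comap (fun ω => (X ω, U ω)) inferInstance]) ω * (aα ω / P ω)) ?_ ?_
        · exact (((stronglyMeasurable_condExp.mono hmXU).measurable.mul
            (((stronglyMeasurable_condExp.mono hmXU).measurable).div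
              ((stronglyMeasurable_condExp.mono hmXU).measurable)))).aestronglyMeasurable
        · filter_upwards [hΓ, hαrep] with ω h1 h2
          rw [h1, ← h2.1]
      refine hΓint.abs.mono' haesm ?_
      filter_upwards [hαrep] with ω h
      rw [Real.norm_eq_abs, abs_mul]
      calc |Γ (X ω, U ω)| * |α z (X ω, U ω)| ≤ |Γ (X ω, U ω)| * 1 :=
            mul_le_mul_of_nonneg_left h.2 (abs_nonneg _)
        _ = |Γ (X ω, U ω)| := mul_one _
    -- S∘, Γ∘ in terms of E1, Em
    have hSE : (fun ω => S (X ω, U ω)) =ᵐ[μ] fun ω => E1 ω + Em ω :=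
      hS.symm.trans (condExp_add hY1int hYm1int _)
    have hΓE : (fun ω => Γ (X ω, U ω)) =ᵐ[μ] fun ω => E1 ω - Em ω :=
      hΓ.symm.trans (condExp_sub hY1int hYm1int _)
    -- collapse the big expression
    have hcollapse : (fun ω => (E1 ω * P ω + Em ω * P ω) +
          ((E1 ω * Q1 ω - E1 ω * Q2 ω) - (Em ω * Q1 ω - Em ω * Q2 ω)))
        =ᵐ[μ] fun ω => p0 ω * (S (X ω, U ω) + Γ (X ω, U ω) * α z (X ω, U ω)) := by
      filter_upwards [hSE, hΓE, hPp0, hQ12, haα, hQπZU] with ω e1 e2 e3 e4 e5 e6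
      have eQ : Q1 ω - Q2 ω = α z (X ω, U ω) * P ω := by rw [← e4, e5, e6]
      rw [e1, e2, ← e3]
      linear_combination (E1 ω - Em ω) * eQ
    -- integrability of the collapsed function
    have hSΓα_int : Integrable (fun ω => S (X ω, U ω) + Γ (X ω, U ω) * α z (X ω, U ω)) μ :=
      hSint.add hΓα_int
    have hp0mul_int : Integrable
        (fun ω => p0 ω * (S (X ω, U ω) + Γ (X ω, U ω) * α z (X ω, U ω))) μ := by
      refine hSΓα_int.norm.mono' ?_ ?_
      · exact ((stronglyMeasurable_condExp.mono hmX).aestronglyMeasurable).mul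
          hSΓα_int.aestronglyMeasurable
      · filter_upwards [hp0π, hπ01] with ω e1 e2
        rw [Real.norm_eq_abs, abs_mul]
        have : |p0 ω| ≤ 1 := by rw [e1]; rw [abs_of_pos e2.1]; linarith [e2.2]
        calc |p0 ω| * |S (X ω, U ω) + Γ (X ω, U ω) * α z (X ω, U ω)|
            ≤ 1 * |S (X ω, U ω) + Γ (X ω, U ω) * α z (X ω, U ω)| :=
              mul_le_mul_of_nonneg_right this (abs_nonneg _)
          _ = ‖S (X ω, U ω) + Γ (X ω, U ω) * α z (X ω, U ω)‖ := by
              rw [one_mul, Real.norm_eq_abs]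
    -- tower property
    have htow1 : μ[(fun ω => 2 * (Y ω * iz ω)) | MeasurableSpace.comap X inferInstance]
        =ᵐ[μ] μ[μ[(fun ω => 2 * (Y ω * iz ω)) |
          MeasurableSpace.comap (fun ω => (X ω, U ω)) inferInstance] |
            MeasurableSpace.comap X inferInstance] :=
      (condExp_condExp_of_le hle hmXU).symm
    have htow2 : μ[μ[(fun ω => 2 * (Y ω * iz ω)) |
          MeasurableSpace.comap (fun ω => (X ω, U ω)) inferInstance] |
            MeasurableSpace.comap X inferInstance]
        =ᵐ[μ] μ[(fun ω => p0 ω * (S (X ω, U ω) + Γ (X ω, U ω) * α z (X ω, U ω))) |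
            MeasurableSpace.comap X inferInstance] :=
      condExp_congr_ae (hJ.trans hcollapse)
    have htow3 : μ[(fun ω => p0 ω * (S (X ω, U ω) + Γ (X ω, U ω) * α z (X ω, U ω))) |
            MeasurableSpace.comap X inferInstance]
        =ᵐ[μ] fun ω => p0 ω * (μ[(fun ω => S (X ω, U ω) + Γ (X ω, U ω) * α z (X ω, U ω)) |
            MeasurableSpace.comap X inferInstance]) ω :=
      condExp_mul_of_stronglyMeasurable_left stronglyMeasurable_condExp hp0mul_int hSΓα_int
    -- LHS via hμY
    have hLHS : μ[(fun ω => 2 * (Y ω * iz ω)) | MeasurableSpace.comap X inferInstance]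
        =ᵐ[μ] fun ω => 2 * (μY z (X ω) * πZ z (X ω)) := by
      have hsmul : (fun ω => 2 * (Y ω * iz ω)) = (2:ℝ) • fun ω => Y ω * iz ω := by
        funext ω; simp
      rw [hsmul]
      have h := condExp_smul (μ := μ) (m := MeasurableSpace.comap X inferInstance)
        (2:ℝ) (fun ω => Y ω * iz ω)
      refine h.trans ?_
      have hμY' := hμY z hz
      simp only [hizp] at hμY'
      filter_upwards [hμY'] with ω hω
      simp only [Pi.smul_apply, smul_eq_mul]
      rw [hω]
    -- combine
    have hch : (fun ω => 2 * (μY z (X ω) * πZ z (X ω))) =ᵐ[μ]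
        fun ω => p0 ω * (μ[(fun ω => S (X ω, U ω) + Γ (X ω, U ω) * α z (X ω, U ω)) |
            MeasurableSpace.comap X inferInstance]) ω :=
      hLHS.symm.trans ((htow1.trans htow2).trans htow3)
    refine ⟨?_, hΓα_int⟩
    filter_upwards [hch, hp0π, hπ01] with ω e1 e2 e3
    have hπne : πZ z (X ω) ≠ 0 := ne_of_gt e3.1
    rw [e2] at e1
    have e4 : (2 * μY z (X ω)) * πZ z (X ω)
        = (μ[(fun ω => S (X ω, U ω) + Γ (X ω, U ω) * α z (X ω, U ω)) |
            MeasurableSpace.comap X inferInstance]) ω * πZ z (X ω) := by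
      linear_combination e1
    exact mul_right_cancel₀ hπne e4
  obtain ⟨k1, hint1⟩ := key 1 (Or.inl rfl)
  obtain ⟨k2, hint2⟩ := key (-1) (Or.inr rfl)
  refine ⟨fun z hz => (key z hz).1, ?_⟩
  have hdiff : (fun ω => Γ (X ω, U ω) * (α 1 (X ω, U ω) - α (-1) (X ω, U ω)))
      = (fun ω => (S (X ω, U ω) + Γ (X ω, U ω) * α 1 (X ω, U ω))
          - (S (X ω, U ω) + Γ (X ω, U ω) * α (-1) (X ω, U ω))) := by
    funext ω; ring
  have hsub := condExp_sub (μ := μ) (m := MeasurableSpace.comap X inferInstance)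
    (hSint.add hint1) (hSint.add hint2)
  rw [hdiff]
  have target1 : (fun ω => 2 * (μY 1 (X ω) - μY (-1) (X ω))) =ᵐ[μ]
      fun ω => (μ[(fun ω => S (X ω, U ω) + Γ (X ω, U ω) * α 1 (X ω, U ω)) |
          MeasurableSpace.comap X inferInstance]) ω
        - (μ[(fun ω => S (X ω, U ω) + Γ (X ω, U ω) * α (-1) (X ω, U ω)) |
          MeasurableSpace.comap X inferInstance]) ω := by
    filter_upwards [k1, k2] with ω e1 e2
    rw [← e1, ← e2]
    ring
  exact target1.trans hsub.symm
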